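/- arXiv:cond-mat/9503017 — 8 statements merged into one kernel-verified Lean document; each statement's English description precedes it below -/
import Mathlib

section
/- With the above notation, the matrix K is invariant under multiplication by the substitution matrix: σK = K, i.e. for every a ∈ A and every j ∈ L one has Σ_{b∈A} σ_{ab} K_{bj} = K_{aj}. -/
/-!
Write `K b j = [j = l b] - [φ j = f b]`. Row `a` of `σ K` is the sum of `K b j` over the letters
`b` of `ρ a`. For consecutive letters `b, b'` the border-forcing rule gives `φ (l b) = f b'`, so
by injectivity of `φ` on `L` the terms `[j = l b]` and `-[φ j = f b']` cancel: the sum telescopes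
to `[j = l (last letter)] - [φ j = f (first letter)]`, which is `K a j` because the last and first
letters of `ρ a` are `l a` and `f a`, and these are stable under `l` and `f`.
-/

theorem List.sum_count_mul_eq_sum_map {α R : Type*} [Fintype α] [DecidableEq α]
    [NonAssocSemiring R] (w : List α) (g : α → R) :
    ∑ b, (w.count b : R) * g b = (w.map g).sum := by
  rw [Finset.sum_list_map_count, ← Finset.sum_subset (Finset.subset_univ w.toFinset)]
  · simp only [nsmul_eq_mul]
  · intro b _ hb
    rw [List.count_eq_zero.mpr (by simpa using hb), Nat.cast_zero, zero_mul]

theorem List.sum_map_sub_eq_of_isChain {α G : Type*} [AddCommGroup G] (g h : α → G) :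
    ∀ (w : List α) (hw : w ≠ []), w.IsChain (fun a b => g a = h b) →
      (w.map fun b => g b - h b).sum = g (w.getLast hw) - h (w.head hw)
  | [], hw, _ => absurd rfl hw
  | [a], _, _ => by simp
  | a :: b :: t, _, hchain => by
    rw [List.isChain_cons_cons] at hchain
    rw [List.map_cons, List.sum_cons,
      List.sum_map_sub_eq_of_isChain g h (b :: t) (List.cons_ne_nil b t) hchain.2,
      List.getLast_cons_cons, List.head_cons, List.head_cons, hchain.1]
    abel

theorem sigma_K_eq_K_general
    (r : ℕ)
    (ρ : Fin r → List (Fin r)) (hρ : ∀ a, ρ a ≠ [])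
    (f l : Fin r → Fin r)
    (hf : ∀ a, f a = (ρ a).head (hρ a))
    (hl : ∀ a, l a = (ρ a).getLast (hρ a))
    (hff : ∀ a, f (f a) = f a) (hll : ∀ a, l (l a) = l a)
    (L F : Finset (Fin r))
    (hL : L = Finset.image l Finset.univ)
    (φ : Fin r → Fin r)
    (hφ : Set.BijOn φ (L : Set (Fin r)) (F : Set (Fin r)))
    (hborder : ∀ a : Fin r, ∀ k : ℕ, ∀ h : k + 1 < (ρ a).length,
      φ (l ((ρ a).get ⟨k, Nat.lt_of_succ_lt h⟩)) = f ((ρ a).get ⟨k + 1, h⟩))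
    (σ : Matrix (Fin r) (Fin r) ℤ)
    (hσ : ∀ a b, σ a b = ((ρ a).count b : ℤ))
    (K : Fin r → Fin r → ℤ)
    (hK : ∀ a j, K a j =
      (if j = l a then (1 : ℤ) else 0) - (if φ j = f a then (1 : ℤ) else 0)) :
    ∀ a : Fin r, ∀ j ∈ L, (∑ b : Fin r, σ a b * K b j) = K a j := by
  intro a j hj
  set indL : Fin r → ℤ := fun b => if j = l b then 1 else 0
  set indF : Fin r → ℤ := fun b => if φ j = f b then 1 else 0
  have hchain : (ρ a).IsChain (fun b b' => indL b = indF b') := by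
    refine List.isChain_iff_getElem.mpr fun k hk => ?_
    have hlb : l (ρ a)[k] ∈ (L : Set (Fin r)) := by simp [hL]
    have hiff : j = l (ρ a)[k] ↔ φ j = f (ρ a)[k + 1] := by
      have hborder_k : φ (l (ρ a)[k]) = f (ρ a)[k + 1] := hborder a k hk
      rw [← hborder_k]
      exact ⟨congrArg φ, fun h => hφ.injOn hj hlb h⟩
    simp only [indL, indF, hiff]
  calc ∑ b, σ a b * K b j
      = ∑ b, ((ρ a).count b : ℤ) * (indL b - indF b) := by simp only [hσ, hK, indL, indF]
    _ = ((ρ a).map fun b => indL b - indF b).sum := List.sum_count_mul_eq_sum_map _ _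
    _ = indL ((ρ a).getLast (hρ a)) - indF ((ρ a).head (hρ a)) :=
      List.sum_map_sub_eq_of_isChain indL indF (ρ a) (hρ a) hchain
    _ = K a j := by simp only [hK, ← hl, ← hf, hll, hff, indL, indF]

/-- For a locally invertible primitive substitution forcing its border
(one-dimensional case, with stable first and last letters), the matrix `K` satisfies
`σ K = K`, i.e. for every letter `a` and every `j ∈ L` one has
`∑ b, σ a b * K b j = K a j`. -/
theorem sigma_K_eq_K
    (r : ℕ) (hr : 1 ≤ r)
    (ρ : Fin r → List (Fin r)) (hρ : ∀ a, ρ a ≠ [])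
    (f l : Fin r → Fin r)
    (hf : ∀ a, f a = (ρ a).head (hρ a))
    (hl : ∀ a, l a = (ρ a).getLast (hρ a))
    (hff : ∀ a, f (f a) = f a) (hll : ∀ a, l (l a) = l a)
    (L F : Finset (Fin r))
    (hL : L = Finset.image l Finset.univ)
    (hF : F = Finset.image f Finset.univ)
    (φ : Fin r → Fin r)
    (hφ : Set.BijOn φ (L : Set (Fin r)) (F : Set (Fin r)))
    (hborder : ∀ a : Fin r, ∀ k : ℕ, ∀ h : k + 1 < (ρ a).length,
      φ (l ((ρ a).get ⟨k, Nat.lt_of_succ_lt h⟩)) = f ((ρ a).get ⟨k + 1, h⟩))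
    (σ : Matrix (Fin r) (Fin r) ℤ)
    (hσ : ∀ a b, σ a b = ((ρ a).count b : ℤ))
    (K : Fin r → Fin r → ℤ)
    (hK : ∀ a j, K a j =
      (if j = l a then (1 : ℤ) else 0) - (if φ j = f a then (1 : ℤ) else 0)) :
    ∀ a : Fin r, ∀ j ∈ L, (∑ b : Fin r, σ a b * K b j) = K a j :=
  sigma_K_eq_K_general r ρ hρ f l hf hl hff hll L F hL φ hφ hborder σ hσ K hK
end

section
/- Suppose in addition that there exists a finite sequence a₁, …, a_n of letters of A such that φ(l(a_k)) = f(a_{k+1}) for all 1 ≤ k < n and such that every letter of A occurs among a₁, …, a_n. Then the subgroup of the free abelian group ℤ^L generated by the rows of K (the row a of K being the vector j ↦ K_{aj}) equals the subgroup generated by the differences of standard basis vectors {e_j − e_{j′} : j, j′ ∈ L}. -/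
open Finset

/-!
As `φ` is injective on `L`, the row of `K` at `a` is `e_{l a} - e_j` for the unique `j ∈ L` with
`φ j = f a`, so every row is a difference. Along the chain that `j` is `l a_k` for `a = a_{k+1}`,
so the row at `a_{k+1}` is `e_{l a_{k+1}} - e_{l a_k}`; since `k ↦ l a_k` hits all of `L`,
telescoping these consecutive differences yields every `e_j - e_{j'}`.
-/

namespace AddSubgroup

variable {G : Type*} [AddGroup G]

theorem sub_mem_of_forall_succ_sub_mem (H : AddSubgroup G) {n : ℕ} (u : Fin n → G)
    (hu : ∀ (k : Fin n) (h : (k : ℕ) + 1 < n), u ⟨k + 1, h⟩ - u k ∈ H) (i j : Fin n) :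
    u i - u j ∈ H := by
  wlog hji : j ≤ i generalizing i j
  · simpa using H.neg_mem (this j i (le_of_not_ge hji))
  obtain ⟨i, hi⟩ := i
  induction i with
  | zero => simp [show j = ⟨0, hi⟩ from Fin.ext (by simpa [Fin.le_def] using hji)]
  | succ k ih =>
    rcases hji.eq_or_lt with rfl | hlt
    · simp
    have hjk : j ≤ ⟨k, by omega⟩ := Fin.le_def.2 (by simp [Fin.lt_def] at hlt; omega)
    simpa using H.add_mem (hu ⟨k, by omega⟩ hi) (ih (by omega) hjk)

theorem closure_single_sub_single_le {ι R : Type*} [DecidableEq ι] [AddGroupWithOne R]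
    (H : AddSubgroup (ι → R))
    {n : ℕ} (u : Fin n → ι) (hsurj : Function.Surjective u)
    (hu : ∀ (k : Fin n) (h : (k : ℕ) + 1 < n),
      Pi.single (u ⟨k + 1, h⟩) (1 : R) - Pi.single (u k) 1 ∈ H) :
    closure {v : ι → R | ∃ j j' : ι, v = Pi.single j 1 - Pi.single j' 1} ≤ H := by
  refine (closure_le H).2 ?_
  rintro v ⟨j, j', rfl⟩
  obtain ⟨i, rfl⟩ := hsurj j
  obtain ⟨i', rfl⟩ := hsurj j'
  exact H.sub_mem_of_forall_succ_sub_mem (fun k => Pi.single (u k) (1 : R)) hu i i'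

end AddSubgroup

theorem ite_sub_ite_eq_single_sub_single {α β R : Type*} [DecidableEq α] [DecidableEq β]
    [AddGroupWithOne R] {s : Finset α} {φ : α → β} (hφ : Set.InjOn φ s) {x y : α}
    (hx : x ∈ s) (hy : y ∈ s) :
    (fun j : {j // j ∈ s} => (if j.val = x then (1 : R) else 0) - if φ j.val = φ y then 1 else 0) =
      Pi.single ⟨x, hx⟩ 1 - Pi.single ⟨y, hy⟩ 1 := by
  funext j
  have hφj : φ j.val = φ y ↔ j = ⟨y, hy⟩ := by
    rw [Subtype.ext_iff]
    exact ⟨fun h => hφ j.property hy h, fun h => h ▸ rfl⟩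
  simp [Pi.single_apply, hφj, Subtype.ext_iff]

theorem image_K_eq_differences_general
    (r : ℕ)
    (f l : Fin r → Fin r)
    (L F : Finset (Fin r))
    (hL : L = Finset.image l Finset.univ)
    (hF : F = Finset.image f Finset.univ)
    (φ : Fin r → Fin r)
    (hφ : Set.BijOn φ (L : Set (Fin r)) (F : Set (Fin r)))
    (K : Fin r → Fin r → ℤ)
    (hK : ∀ a j, K a j =
      (if j = l a then (1 : ℤ) else 0) - (if φ j = f a then (1 : ℤ) else 0))
    -- a chain `a₁, …, a_n` following the border-forcing rule and containing every letter
    (n : ℕ) (w : Fin n → Fin r)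
    (hchain : ∀ k : Fin n, ∀ h : (k : ℕ) + 1 < n,
      φ (l (w k)) = f (w ⟨(k : ℕ) + 1, h⟩))
    (hcover : ∀ a : Fin r, ∃ k : Fin n, w k = a) :
    AddSubgroup.closure {v : {j // j ∈ L} → ℤ | ∃ a : Fin r, v = fun j => K a j.val} =
      AddSubgroup.closure {v : {j // j ∈ L} → ℤ |
        ∃ j j' : {j // j ∈ L}, v = Pi.single j 1 - Pi.single j' 1} := by
  have hlL : ∀ a, l a ∈ L := fun a => hL ▸ mem_image_of_mem l (mem_univ a)
  have hpartner : ∀ a, ∃ j ∈ L, φ j = f a := fun a =>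
    hφ.surjOn (by simp [hF] : f a ∈ (F : Set (Fin r)))
  choose g hgL hgφ using hpartner
  have hrow : ∀ a, (fun j : {j // j ∈ L} => K a j.val) =
      Pi.single ⟨l a, hlL a⟩ 1 - Pi.single ⟨g a, hgL a⟩ 1 := by
    intro a
    simp_rw [hK, ← hgφ a]
    exact ite_sub_ite_eq_single_sub_single hφ.injOn _ _
  have hg_chain : ∀ (k : Fin n) (h : (k : ℕ) + 1 < n), g (w ⟨k + 1, h⟩) = l (w k) :=
    fun k h => hφ.injOn (hgL _) (hlL _) (by rw [hgφ, hchain k h])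
  refine le_antisymm ((AddSubgroup.closure_le _).2 ?_)
    (AddSubgroup.closure_single_sub_single_le _ (fun k => ⟨l (w k), hlL _⟩) ?_ ?_)
  · rintro _ ⟨a, rfl⟩
    exact AddSubgroup.subset_closure ⟨_, _, hrow a⟩
  · rintro ⟨j, hj⟩
    obtain ⟨a, -, rfl⟩ := mem_image.1 (hL ▸ hj)
    obtain ⟨k, rfl⟩ := hcover a
    exact ⟨k, rfl⟩
  · intro k h
    refine AddSubgroup.subset_closure ⟨w ⟨k + 1, h⟩, ?_⟩
    simp only [hrow, hg_chain k h]

/-- Under the border-forcing and primitivity (chain covering all letters)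
hypotheses, the subgroup of `ℤ^L` generated by the rows of `K` equals the subgroup
generated by the differences of standard basis vectors `e_j - e_j'`, `j, j' ∈ L`. -/
theorem image_K_eq_differences
    (r : ℕ) (hr : 1 ≤ r)
    (ρ : Fin r → List (Fin r)) (hρ : ∀ a, ρ a ≠ [])
    (f l : Fin r → Fin r)
    (hf : ∀ a, f a = (ρ a).head (hρ a))
    (hl : ∀ a, l a = (ρ a).getLast (hρ a))
    (hff : ∀ a, f (f a) = f a) (hll : ∀ a, l (l a) = l a)
    (L F : Finset (Fin r))
    (hL : L = Finset.image l Finset.univ)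
    (hF : F = Finset.image f Finset.univ)
    (φ : Fin r → Fin r)
    (hφ : Set.BijOn φ (L : Set (Fin r)) (F : Set (Fin r)))
    (hborder : ∀ a : Fin r, ∀ k : ℕ, ∀ h : k + 1 < (ρ a).length,
      φ (l ((ρ a).get ⟨k, Nat.lt_of_succ_lt h⟩)) = f ((ρ a).get ⟨k + 1, h⟩))
    (K : Fin r → Fin r → ℤ)
    (hK : ∀ a j, K a j =
      (if j = l a then (1 : ℤ) else 0) - (if φ j = f a then (1 : ℤ) else 0))
    -- a chain `a₁, …, a_n` following the border-forcing rule and containing every letter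
    (n : ℕ) (w : Fin n → Fin r)
    (hchain : ∀ k : Fin n, ∀ h : (k : ℕ) + 1 < n,
      φ (l (w k)) = f (w ⟨(k : ℕ) + 1, h⟩))
    (hcover : ∀ a : Fin r, ∃ k : Fin n, w k = a) :
    AddSubgroup.closure {v : {j // j ∈ L} → ℤ | ∃ a : Fin r, v = fun j => K a j.val} =
      AddSubgroup.closure {v : {j // j ∈ L} → ℤ |
        ∃ j j' : {j // j ∈ L}, v = Pi.single j 1 - Pi.single j' 1} :=
  image_K_eq_differences_general r f l L F hL hF φ hφ K hK n w hchain hcover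
end

section
/- Suppose in addition that there exists a finite sequence a₁, …, a_n of letters of A such that φ(l(a_k)) = f(a_{k+1}) for all 1 ≤ k < n and such that every letter of A occurs among a₁, …, a_n. Then the rank of the matrix K over ℚ equals |L| − 1, where |L| is the number of distinct last letters of substitutes. -/
open Finset

/-!
Writing `ψ : F → L` for the inverse of `φ`, the row of `K` at `a` is `e (l a) - e (ψ (f a))`,
so `K` is the incidence matrix of the directed graph on `L` with an edge `ψ (f a) → l a` for
every letter `a`. The border-forcing chain says `ψ (f aₖ₊₁) = l aₖ`, so it is a walk in this
graph through every vertex. Telescoping along the walk puts every `e i - e j` in the row space,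
which therefore is the whole hyperplane of vectors with coordinate sum zero, of dimension
`|L| - 1`.
-/

section SumHyperplane

variable (K ι : Type*) [Field K] [Fintype ι]

def coordSum : (ι → K) →ₗ[K] K := ∑ i, LinearMap.proj i

variable {K ι}

@[simp]
theorem coordSum_apply (v : ι → K) : coordSum K ι v = ∑ i, v i := by
  simp [coordSum]

theorem finrank_ker_coordSum :
    Module.finrank K (LinearMap.ker (coordSum K ι)) = Fintype.card ι - 1 := by
  classical
  cases isEmpty_or_nonempty ι with
  | inl hι =>
    have := Submodule.finrank_le (LinearMap.ker (coordSum K ι))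
    rw [Module.finrank_pi] at this
    rw [Fintype.card_eq_zero] at this ⊢
    omega
  | inr hι =>
    obtain ⟨i₀⟩ := hι
    have hsurj : Function.Surjective (coordSum K ι) := fun c =>
      ⟨Pi.single i₀ c, by simp [sum_pi_single']⟩
    have := LinearMap.finrank_range_add_finrank_ker (coordSum K ι)
    rw [LinearMap.range_eq_top.mpr hsurj, finrank_top, Module.finrank_self,
      Module.finrank_pi] at this
    omega

theorem ker_coordSum_le [DecidableEq ι] {S : Submodule K (ι → K)}
    (hS : ∀ i j, Pi.single i 1 - Pi.single j 1 ∈ S) : LinearMap.ker (coordSum K ι) ≤ S := by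
  intro x hx
  cases isEmpty_or_nonempty ι with
  | inl hι => simp [Subsingleton.elim x 0]
  | inr hι =>
    obtain ⟨j₀⟩ := hι
    have hx : ∑ i, x i = 0 := by simpa using hx
    have hx_eq : x = ∑ i, x i • (Pi.single i 1 - Pi.single j₀ 1) := by
      simp only [smul_sub, sum_sub_distrib, ← sum_smul, hx, zero_smul, sub_zero]
      simp only [← Pi.single_smul', smul_eq_mul, mul_one, univ_sum_single]
    rw [hx_eq]
    exact S.sum_mem fun i _ => S.smul_mem _ (hS i j₀)

theorem finrank_span_eq_card_sub_one [DecidableEq ι] {S : Set (ι → K)}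
    (hS : ∀ v ∈ S, ∑ i, v i = 0)
    (hdiff : ∀ i j, Pi.single i 1 - Pi.single j 1 ∈ Submodule.span K S) :
    Module.finrank K (Submodule.span K S) = Fintype.card ι - 1 := by
  have : Submodule.span K S = LinearMap.ker (coordSum K ι) :=
    le_antisymm (Submodule.span_le.mpr fun v hv => by simpa using hS v hv) (ker_coordSum_le hdiff)
  rw [this, finrank_ker_coordSum]

end SumHyperplane

section IncidenceMatrix

variable {α ι K : Type*} [DecidableEq ι] {M : Matrix α ι K} {s t : α → ι} {n : ℕ} {w : Fin n → α}

theorem single_sub_single_mem_span_rows_of_walk [Ring K]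
    (hM : ∀ a, M a = Pi.single (s a) 1 - Pi.single (t a) 1)
    (hw : ∀ k : Fin n, ∀ h : (k : ℕ) + 1 < n, t (w ⟨(k : ℕ) + 1, h⟩) = s (w k)) (k : Fin n) :
    Pi.single (s (w k)) 1 - Pi.single (s (w ⟨0, k.pos⟩)) 1 ∈ Submodule.span K (Set.range M) := by
  obtain ⟨k, hk⟩ := k
  induction k with
  | zero => simp
  | succ k ih =>
    have hrow := hM (w ⟨k + 1, hk⟩)
    rw [hw ⟨k, by omega⟩ hk] at hrow
    have := Submodule.add_mem _ (Submodule.subset_span (Set.mem_range.mpr ⟨_, hrow⟩))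
      (ih (by omega))
    rwa [sub_add_sub_cancel] at this

theorem Matrix.rank_eq_card_sub_one_of_walk [Field K] [Fintype ι] [Finite α]
    (hM : ∀ a, M a = Pi.single (s a) 1 - Pi.single (t a) 1)
    (hw : ∀ k : Fin n, ∀ h : (k : ℕ) + 1 < n, t (w ⟨(k : ℕ) + 1, h⟩) = s (w k))
    (hcover : ∀ i, ∃ k, s (w k) = i) :
    M.rank = Fintype.card ι - 1 := by
  rw [Matrix.rank_eq_finrank_span_row]
  refine finrank_span_eq_card_sub_one ?_ fun i j => ?_
  · rintro _ ⟨a, rfl⟩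
    simp [hM a, sum_sub_distrib]
  · obtain ⟨k, rfl⟩ := hcover i
    obtain ⟨m, rfl⟩ := hcover j
    have := Submodule.sub_mem _ (single_sub_single_mem_span_rows_of_walk hM hw k)
      (single_sub_single_mem_span_rows_of_walk hM hw m)
    rwa [sub_sub_sub_cancel_right] at this

end IncidenceMatrix

theorem row_eq_single_sub_single {α β R : Type*} [DecidableEq β] [Ring R] {L : Finset β}
    {l f : α → β} {φ : β → β} (hφ : Set.InjOn φ L) {Kq : Matrix α {j // j ∈ L} R}
    (hKq : ∀ a j, Kq a j = (if j.1 = l a then 1 else 0) - (if φ j = f a then 1 else 0))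
    {a : α} (hla : l a ∈ L) (j : {j // j ∈ L}) (hj : φ j = f a) :
    Kq a = Pi.single ⟨l a, hla⟩ 1 - Pi.single j 1 := by
  ext i
  have hφi : φ i = f a ↔ i.1 = j.1 := ⟨fun h => hφ i.2 j.2 (h.trans hj.symm), fun h => h ▸ hj⟩
  simp only [hKq, Pi.sub_apply, Pi.single_apply, Subtype.ext_iff, hφi]

theorem rank_K_eq_card_L_sub_one_general
    (r : ℕ)
    (f l : Fin r → Fin r)
    (L F : Finset (Fin r))
    (hL : L = Finset.image l Finset.univ)
    (hF : F = Finset.image f Finset.univ)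
    (φ : Fin r → Fin r)
    (hφ : Set.BijOn φ (L : Set (Fin r)) (F : Set (Fin r)))
    (K : Fin r → Fin r → ℤ)
    (hK : ∀ a j, K a j =
      (if j = l a then (1 : ℤ) else 0) - (if φ j = f a then (1 : ℤ) else 0))
    -- a chain `a₁, …, a_n` following the border-forcing rule and containing every letter
    (n : ℕ) (w : Fin n → Fin r)
    (hchain : ∀ k : Fin n, ∀ h : (k : ℕ) + 1 < n,
      φ (l (w k)) = f (w ⟨(k : ℕ) + 1, h⟩))
    (hcover : ∀ a : Fin r, ∃ k : Fin n, w k = a)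
    (Kq : Matrix (Fin r) {j // j ∈ L} ℚ)
    (hKq : ∀ a j, Kq a j = (K a j.val : ℚ)) :
    Kq.rank = L.card - 1 := by
  have hl_mem : ∀ a, l a ∈ L := fun a => hL ▸ mem_image_of_mem l (mem_univ a)
  have hpre : ∀ a, ∃ j : {j // j ∈ L}, φ j = f a := fun a => by
    obtain ⟨j, hj, hφj⟩ := hφ.surjOn (by simp [hF] : f a ∈ (F : Set (Fin r)))
    exact ⟨⟨j, hj⟩, hφj⟩
  choose t ht using hpre
  have hrow a : Kq a = Pi.single ⟨l a, hl_mem a⟩ 1 - Pi.single (t a) 1 :=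
    row_eq_single_sub_single hφ.injOn (fun a j => by simp [hKq, hK]) (hl_mem a) (t a) (ht a)
  rw [Matrix.rank_eq_card_sub_one_of_walk hrow (w := w) ?_ ?_, Fintype.card_coe]
  · exact fun k hk => Subtype.ext (hφ.injOn (t _).2 (hl_mem _) ((ht _).trans (hchain k hk).symm))
  · rintro ⟨j, hj⟩
    obtain ⟨a, -, rfl⟩ := mem_image.mp (hL ▸ hj)
    obtain ⟨k, rfl⟩ := hcover a
    exact ⟨k, rfl⟩

/-- Under the border-forcing and primitivity (chain covering all letters)
hypotheses, the rank of the matrix `K` over `ℚ` equals `|L| - 1`. -/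
theorem rank_K_eq_card_L_sub_one
    (r : ℕ) (hr : 1 ≤ r)
    (ρ : Fin r → List (Fin r)) (hρ : ∀ a, ρ a ≠ [])
    (f l : Fin r → Fin r)
    (hf : ∀ a, f a = (ρ a).head (hρ a))
    (hl : ∀ a, l a = (ρ a).getLast (hρ a))
    (hff : ∀ a, f (f a) = f a) (hll : ∀ a, l (l a) = l a)
    (L F : Finset (Fin r))
    (hL : L = Finset.image l Finset.univ)
    (hF : F = Finset.image f Finset.univ)
    (φ : Fin r → Fin r)
    (hφ : Set.BijOn φ (L : Set (Fin r)) (F : Set (Fin r)))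
    (hborder : ∀ a : Fin r, ∀ k : ℕ, ∀ h : k + 1 < (ρ a).length,
      φ (l ((ρ a).get ⟨k, Nat.lt_of_succ_lt h⟩)) = f ((ρ a).get ⟨k + 1, h⟩))
    (K : Fin r → Fin r → ℤ)
    (hK : ∀ a j, K a j =
      (if j = l a then (1 : ℤ) else 0) - (if φ j = f a then (1 : ℤ) else 0))
    -- a chain `a₁, …, a_n` following the border-forcing rule and containing every letter
    (n : ℕ) (w : Fin n → Fin r)
    (hchain : ∀ k : Fin n, ∀ h : (k : ℕ) + 1 < n,
      φ (l (w k)) = f (w ⟨(k : ℕ) + 1, h⟩))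
    (hcover : ∀ a : Fin r, ∃ k : Fin n, w k = a)
    (Kq : Matrix (Fin r) {j // j ∈ L} ℚ)
    (hKq : ∀ a j, Kq a j = (K a j.val : ℚ)) :
    Kq.rank = L.card - 1 :=
  rank_K_eq_card_L_sub_one_general r f l L F hL hF φ hφ K hK n w hchain hcover Kq hKq
end

section
/- Let n ≥ 0 and let A : ℤⁿ → ℤⁿ be a ℤ-linear endomorphism such that ker A = ker A² and A maps its range onto itself, A(range A) = range A (so that the restriction of A to its range is an automorphism of the range). Then the direct limit of the directed system ℤⁿ → ℤⁿ → ℤⁿ → ⋯ indexed by ℕ, in which every connecting map equals A, is isomorphic as an abelian group to ℤⁿ / ker A. -/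
/-! The stage-0 map `M → lim (M, A)` is onto: `of i x = of (i + 1) (A x)` and
`A x ∈ range A = range A^(i+1)`. Its kernel is `⋃ₖ ker Aᵏ`, which is `ker A` because
`ker A = ker A²` makes the kernels of the powers stabilize at once. -/

namespace Module.End

open LinearMap Module.DirectLimit

variable {R M : Type*}

section Semiring

variable [Semiring R] [AddCommMonoid M] [Module R M] (A : Module.End R M)

theorem ker_pow_succ_eq_ker (hker : ker A = ker (A ∘ₗ A)) (k : ℕ) :
    ker (A ^ (k + 1)) = ker A := by
  induction k with
  | zero => rw [zero_add, pow_one]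
  | succ k ih => rw [pow_succ, mul_eq_comp, ker_comp, ih, ← ker_comp, ← hker]

theorem range_pow_succ_eq_range (hrange : (range A).map A = range A) (k : ℕ) :
    range (A ^ (k + 1)) = range A := by
  induction k with
  | zero => rw [zero_add, pow_one]
  | succ k ih => rw [pow_succ', mul_eq_comp, range_comp, ih, hrange]

instance directedSystem_pow :
    DirectedSystem (fun _ : ℕ => M) (fun i j (_ : i ≤ j) => ⇑(A ^ (j - i))) where
  map_self i x := by rw [Nat.sub_self, pow_zero, one_apply]
  map_map k j i hij hjk x := by
    rw [← mul_apply, ← pow_add, Nat.sub_add_sub_cancel hjk hij]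

theorem ker_of_zero_pow_eq_ker (hker : ker A = ker (A ∘ₗ A)) :
    ker (of R ℕ (fun _ => M) (fun i j _ => A ^ (j - i)) 0) = ker A := by
  ext x
  constructor
  · intro hx
    obtain ⟨j, -, hj⟩ := of.zero_exact (mem_ker.mp hx)
    cases j with
    | zero =>
      rw [Nat.sub_self, pow_zero, one_apply] at hj
      rw [hj]; exact zero_mem _
    | succ k => rw [← ker_pow_succ_eq_ker A hker k]; exact hj
  · intro hx
    rw [mem_ker, ← of_f (hij := zero_le_one), Nat.sub_zero, pow_one, mem_ker.mp hx, map_zero]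

theorem of_zero_pow_surjective (hrange : (range A).map A = range A) :
    Function.Surjective (of R ℕ (fun _ => M) (fun i j _ => A ^ (j - i)) 0) := by
  intro z
  obtain ⟨i, x, rfl⟩ := exists_of z
  obtain ⟨y, hy⟩ : A x ∈ range (A ^ (i + 1)) := by
    rw [range_pow_succ_eq_range A hrange]; exact mem_range_self A x
  refine ⟨y, ?_⟩
  rw [← of_f (hij := Nat.zero_le (i + 1)), Nat.sub_zero, hy,
    ← of_f (hij := Nat.le_add_right i 1), Nat.add_sub_cancel_left, pow_one]

end Semiring

variable [Ring R] [AddCommGroup M] [Module R M] (A : Module.End R M)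

noncomputable def quotKerEquivDirectLimitPow (hker : ker A = ker (A ∘ₗ A))
    (hrange : (range A).map A = range A) :
    (M ⧸ ker A) ≃ₗ[R] DirectLimit (fun _ : ℕ => M) (fun i j _ => A ^ (j - i)) :=
  (Submodule.quotEquivOfEq _ _ (ker_of_zero_pow_eq_ker A hker).symm).trans
    ((of R ℕ (fun _ => M) (fun i j _ => A ^ (j - i)) 0).quotKerEquivOfSurjective
      (of_zero_pow_surjective A hrange))

end Module.End

/-- If `A : ℤⁿ → ℤⁿ` is a `ℤ`-linear endomorphism with `ker A = ker A²`
and `A (range A) = range A`, then the direct limit of the `ℕ`-indexed constant system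
`ℤⁿ → ℤⁿ → ⋯` with all connecting maps equal to `A` is isomorphic, as an abelian group,
to `ℤⁿ / ker A`. -/
theorem directLimit_constant_system_iso_quotient_ker
    (n : ℕ) (A : (Fin n → ℤ) →ₗ[ℤ] (Fin n → ℤ))
    (hker : LinearMap.ker A = LinearMap.ker (A ∘ₗ A))
    (hrange : Submodule.map A (LinearMap.range A) = LinearMap.range A) :
    Nonempty
      ((Module.DirectLimit (ι := ℕ) (fun _ : ℕ => Fin n → ℤ)
          (fun i j (_ : i ≤ j) => A ^ (j - i))) ≃+
        ((Fin n → ℤ) ⧸ LinearMap.ker A)) :=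
  ⟨(Module.End.quotKerEquivDirectLimitPow A hker hrange).symm.toAddEquiv⟩
end

section
/- The Penrose substitution matrix σ̌ is invertible over the integers, i.e. σ̌ is a unit in the ring of 40×40 integer matrices (equivalently, det σ̌ = ±1); consequently σ = σ̌⁴ is also invertible over ℤ. -/
/-- The 10×10 cyclic-shift permutation matrix `ω`, with `ω α β = 1` iff `β ≡ α + 1 (mod 10)`. -/
def omegaMat : Matrix (Fin 10) (Fin 10) ℤ :=
  Matrix.of fun α β => if β = α + 1 then 1 else 0

/-- The block-diagonal rotation matrix `R = diag(ω, ω, ω, ω) ∈ M₄₀(ℤ)`. -/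
def Rmat : Matrix (Fin 40) (Fin 40) ℤ :=
  Matrix.of fun i j =>
    if i.val / 10 = j.val / 10 then
      omegaMat ⟨i.val % 10, by omega⟩ ⟨j.val % 10, by omega⟩
    else 0

/-- The 4×4 array of 10×10 blocks of the Penrose triangle substitution matrix:
rows of blocks `(ω⁴, ω⁰, 0, ω⁶)`, `(ω⁰, ω⁶, ω⁴, 0)`, `(ω³, 0, ω⁷, 0)`, `(0, ω⁷, 0, ω³)`. -/
def penroseBlocks : Fin 4 → Fin 4 → Matrix (Fin 10) (Fin 10) ℤ :=
  ![![omegaMat ^ 4, omegaMat ^ 0, 0, omegaMat ^ 6],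
    ![omegaMat ^ 0, omegaMat ^ 6, omegaMat ^ 4, 0],
    ![omegaMat ^ 3, 0, omegaMat ^ 7, 0],
    ![0, omegaMat ^ 7, 0, omegaMat ^ 3]]

/-- The Penrose triangle substitution matrix `σ̌ ∈ M₄₀(ℤ)`. -/
def sigmaCheck : Matrix (Fin 40) (Fin 40) ℤ :=
  Matrix.of fun i j =>
    penroseBlocks ⟨i.val / 10, by omega⟩ ⟨j.val / 10, by omega⟩
      ⟨i.val % 10, by omega⟩ ⟨j.val % 10, by omega⟩

/-- The standard basis vectors of `ℤ⁴⁰`, numbered `1`-based: `stdVec i = e_{i+1}`. -/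
def stdVec (i : Fin 40) : Fin 40 → ℤ := Pi.single i 1

/-- `v₁ = e₂₇ − e₃₂`. -/
def pv1 : Fin 40 → ℤ := stdVec 26 - stdVec 31
/-- `v₂ = e₇ − e₁₂`. -/
def pv2 : Fin 40 → ℤ := stdVec 6 - stdVec 11
/-- `w₁ = e₈ − e₁₁ + e₂₉ − e₄₀`. -/
def pw1 : Fin 40 → ℤ := stdVec 7 - stdVec 10 + stdVec 28 - stdVec 39
/-- `w₂ = e₆ − e₁₃ − e₃₀ + e₃₉`. -/
def pw2 : Fin 40 → ℤ := stdVec 5 - stdVec 12 - stdVec 29 + stdVec 38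

/-- The subgroup `G ⊆ ℤ⁴⁰` generated by the 40 vectors
`R^α v₁, R^α v₂, R^α w₁, R^α w₂`, `α = 0, …, 9` (matrices acting on column vectors). -/
def Gsub : AddSubgroup (Fin 40 → ℤ) :=
  AddSubgroup.closure
    {x | ∃ α : Fin 10,
      x = (Rmat ^ (α : ℕ)).mulVec pv1 ∨ x = (Rmat ^ (α : ℕ)).mulVec pv2 ∨
      x = (Rmat ^ (α : ℕ)).mulVec pw1 ∨ x = (Rmat ^ (α : ℕ)).mulVec pw2}

/-- The subgroup `H₁ ⊆ ℤ⁴⁰` generated by the 20 vectors `R^α v₁, R^α v₂`, `α = 0, …, 9`. -/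
def H1sub : AddSubgroup (Fin 40 → ℤ) :=
  AddSubgroup.closure
    {x | ∃ α : Fin 10,
      x = (Rmat ^ (α : ℕ)).mulVec pv1 ∨ x = (Rmat ^ (α : ℕ)).mulVec pv2}

/-! All blocks of `σ̌` are powers of the cyclic shift `ω`, and `ω ^ 10 = 1`, so `σ̌` is a `4 × 4`
matrix over the commutative ring `ℤ[ω] ≅ ℤ[C₁₀]`. There its inverse is again a matrix of signed
powers of `ω`, and checking that it is a right inverse is block multiplication with exponents read
modulo `10`. The block decomposition `M₄(M₁₀(ℤ)) ≃+* M₄₀(ℤ)` carries this back to `σ̌`, and over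
the commutative ring `ℤ` a one-sided inverse is two-sided. -/

open Matrix

theorem Matrix.permMatrix_pow {n R : Type*} [DecidableEq n] [Fintype n] [Semiring R]
    (σ : Equiv.Perm n) (k : ℕ) : (σ ^ k).permMatrix R = σ.permMatrix R ^ k := by
  induction k with
  | zero => simp
  | succ k ih => rw [pow_succ, permMatrix_mul, ih, pow_succ']

theorem omegaMat_eq_permMatrix : omegaMat = (Equiv.addRight (1 : Fin 10)).permMatrix ℤ := by
  ext i j
  simp [omegaMat, PEquiv.toMatrix_apply, eq_comm]

theorem omegaMat_pow_ten : omegaMat ^ 10 = 1 := by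
  have : Equiv.addRight (1 : Fin 10) ^ 10 = 1 := Equiv.ext (by decide)
  rw [omegaMat_eq_permMatrix, ← permMatrix_pow, this, permMatrix_one]

theorem omegaMat_pow_of_ten_le {k : ℕ} (hk : 10 ≤ k) : omegaMat ^ k = omegaMat ^ (k - 10) := by
  rw [← Nat.sub_add_cancel hk, pow_add, omegaMat_pow_ten, mul_one, Nat.add_sub_cancel]

def penroseInvBlocks : Matrix (Fin 4) (Fin 4) (Matrix (Fin 10) (Fin 10) ℤ) :=
  !![omegaMat ^ 6, 0, 0, -omegaMat ^ 9;
     0, omegaMat ^ 4, -omegaMat, 0;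
     -omegaMat ^ 2, 0, omegaMat ^ 3, omegaMat ^ 5;
     0, -omegaMat ^ 8, omegaMat ^ 5, omegaMat ^ 7]

theorem penroseBlocks_mul_penroseInvBlocks : Matrix.of penroseBlocks * penroseInvBlocks = 1 := by
  ext1 i j
  fin_cases i <;> fin_cases j <;>
    simp [mul_apply, Fin.sum_univ_four, penroseBlocks, penroseInvBlocks, ← pow_add, ← pow_succ,
      omegaMat_pow_of_ten_le]

def blockRingEquiv (m n : ℕ) (R : Type*) [AddCommMonoid R] [Mul R] :
    Matrix (Fin m) (Fin m) (Matrix (Fin n) (Fin n) R) ≃+* Matrix (Fin (m * n)) (Fin (m * n)) R :=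
  (compRingEquiv (Fin m) (Fin n) R).trans (reindexRingEquiv R finProdFinEquiv)

theorem sigmaCheck_eq_blockRingEquiv :
    sigmaCheck = blockRingEquiv 4 10 ℤ (Matrix.of penroseBlocks) := by
  ext i j
  rfl

/-- The Penrose substitution matrix `σ̌` is invertible over `ℤ`
(a unit of the ring `M₄₀(ℤ)`); consequently `σ = σ̌⁴` is also invertible over `ℤ`. -/
theorem sigmaCheck_isUnit : IsUnit sigmaCheck ∧ IsUnit (sigmaCheck ^ 4) := by
  have hinv : sigmaCheck * blockRingEquiv 4 10 ℤ penroseInvBlocks = 1 := by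
    rw [sigmaCheck_eq_blockRingEquiv, ← map_mul, penroseBlocks_mul_penroseInvBlocks, map_one]
  have hu : IsUnit sigmaCheck := ⟨⟨_, _, hinv, mul_eq_one_comm.mp hinv⟩, rfl⟩
  exact ⟨hu, hu.pow 4⟩
end

section
/- The quotient group ℤ⁴⁰ / G is a free abelian group of rank 8 (in particular it has no torsion). This is the computation underlying the result K₀(A_T) ≅ ℤ⁸ ⊕ ℤ for the algebra of a Penrose tiling. -/
/-!
The quotient map is an explicit integer matrix `P : ℤ⁴⁰ → ℤ⁸` that kills every generator of `G`
and is the identity on the eight coordinates `e₁₉, e₂₀, e₃₅, …, e₄₀` (indices `18, 19, 34, …, 39`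
of `Fin 40`). Conversely, for every other coordinate `j`, `G` contains a vector whose first nonzero
entry is a `1` in position `j`. By unitriangular elimination these vectors and the eight
coordinates span `ℤ⁴⁰`, so `ker P = G` and `ℤ⁴⁰ ⧸ G ≅ ℤ⁸`.
-/

open Matrix

theorem Matrix.permMatrix_pow_mulVec {n R : Type*} [DecidableEq n] [Fintype n] [CommRing R]
    (σ : Equiv.Perm n) (k : ℕ) (v : n → R) : σ.permMatrix R ^ k *ᵥ v = v ∘ ⇑(σ ^ k) := by
  induction k generalizing v with
  | zero => simp
  | succ k ih =>
    rw [pow_succ, ← mulVec_mulVec, ih, permMatrix_mulVec, pow_succ', Equiv.Perm.coe_mul,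
      Function.comp_assoc]

theorem Submodule.eq_top_of_forall_exists_unitriangular {ι R : Type*} [LinearOrder ι] [Fintype ι]
    [Ring R] (K : Submodule R (ι → R)) (h : ∀ j, ∃ c ∈ K, c j = 1 ∧ ∀ i < j, c i = 0) :
    K = ⊤ := by
  have hsingle (j : ι) : Pi.single j 1 ∈ K := by
    induction j using WellFoundedGT.induction with
    | _ j ih =>
    obtain ⟨c, hcK, hcj, hlow⟩ := h j
    have hc := pi_eq_sum_univ' c
    rw [← Finset.add_sum_erase _ _ (Finset.mem_univ j), hcj, one_smul] at hc
    rw [eq_sub_of_add_eq hc.symm]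
    refine K.sub_mem hcK (K.sum_mem fun i hi => ?_)
    rcases lt_or_gt_of_ne (Finset.ne_of_mem_erase hi) with hij | hij
    · simp [hlow i hij]
    · exact K.smul_mem _ (ih i hij)
  refine eq_top_iff.2 fun x _ => ?_
  rw [pi_eq_sum_univ' x]
  exact K.sum_mem fun i _ => K.smul_mem _ (hsingle i)

theorem AddMonoidHom.ker_eq_of_sup_range_eq_top {M N : Type*} [AddCommGroup M] [AddGroup N]
    {φ : M →+ N} {s : N →+ M} (hs : Function.RightInverse s φ) {G : AddSubgroup M}
    (hG : G ≤ φ.ker) (hsup : G ⊔ s.range = ⊤) : φ.ker = G := by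
  refine le_antisymm (fun x hx => ?_) hG
  obtain ⟨g, hg, _, ⟨y, rfl⟩, rfl⟩ := AddSubgroup.mem_sup.1 (hsup ▸ AddSubgroup.mem_top x)
  have hy : y = 0 := by
    rwa [AddMonoidHom.mem_ker, map_add, hG hg, zero_add, hs y] at hx
  simpa [hy] using hg

def blockRotate : Equiv.Perm (Fin 40) :=
  finProdFinEquiv.permCongr ((Equiv.refl (Fin 4)).prodCongr (finRotate 10))

set_option maxRecDepth 100000 in
theorem Rmat_eq_permMatrix : Rmat = blockRotate.permMatrix ℤ := by
  decide

theorem Rmat_pow_mulVec (n : ℕ) (v : Fin 40 → ℤ) : Rmat ^ n *ᵥ v = v ∘ ⇑(blockRotate ^ n) := by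
  rw [Rmat_eq_permMatrix, permMatrix_pow_mulVec]

def baseVec : Fin 4 → Fin 40 → ℤ := ![pv1, pv2, pw1, pw2]

def generator (t : Fin 4) (α : Fin 10) : Fin 40 → ℤ := baseVec t ∘ ⇑(blockRotate ^ (α : ℕ))

theorem Gsub_eq_closure_generator :
    Gsub = AddSubgroup.closure (Set.range fun p : Fin 4 × Fin 10 => generator p.1 p.2) := by
  rw [Gsub]
  congr 1
  ext x
  simp only [Set.mem_ofPred_eq, Set.mem_range, Prod.exists, Rmat_pow_mulVec]
  constructor
  · rintro ⟨α, rfl | rfl | rfl | rfl⟩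
    exacts [⟨0, α, rfl⟩, ⟨1, α, rfl⟩, ⟨2, α, rfl⟩, ⟨3, α, rfl⟩]
  · rintro ⟨t, α, rfl⟩
    refine ⟨α, ?_⟩
    fin_cases t <;> simp [generator, baseVec]

theorem generator_mem_Gsub (t : Fin 4) (α : Fin 10) : generator t α ∈ Gsub :=
  Gsub_eq_closure_generator ▸ AddSubgroup.subset_closure ⟨(t, α), rfl⟩

-- The rows form the basis of the annihilator of `G` dual to the coordinates `sectionIdx`.
def quotientProj : Matrix (Fin 8) (Fin 40) ℤ :=
  !![ 0,  1,  0,  1,  0,  1,  0,  1,  0,  1,  1,  0,  1,  0,  1,  0,  1,  0,  1,  0,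
      0,  0,  0,  0,  0,  0,  0,  0,  0,  0,  0,  0,  0,  0,  0,  0,  0,  0,  0,  0;
      1,  0,  1,  0,  1,  0,  1,  0,  1,  0,  0,  1,  0,  1,  0,  1,  0,  1,  0,  1,
      0,  0,  0,  0,  0,  0,  0,  0,  0,  0,  0,  0,  0,  0,  0,  0,  0,  0,  0,  0;
      0,  0,  1,  0,  0, -1, -1, -2, -1, -1, -1, -1, -2, -1, -1,  0,  0,  1,  0,  0,
      0,  0,  0,  0,  0,  1,  1,  1,  1,  1,  1,  1,  1,  1,  1,  0,  0,  0,  0,  0;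
     -1, -1, -1,  0,  0,  0,  0,  0, -1, -1,  0,  0,  0, -1, -1, -1, -1, -1,  0,  0,
      1,  0,  0,  0,  0, -1,  0,  0,  0,  0, -1,  0,  0,  0,  0,  1,  0,  0,  0,  0;
     -1,  0, -1,  0,  0,  1,  0,  1,  0,  0,  1,  0,  1,  0,  0, -1,  0, -1,  0,  0,
      0,  1,  0,  0,  0,  0, -1,  0,  0,  0,  0, -1,  0,  0,  0,  0,  1,  0,  0,  0;
      0,  0,  0,  0,  0,  1,  1,  1,  1,  1,  1,  1,  1,  1,  1,  0,  0,  0,  0,  0,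
      0,  0,  1,  0,  0,  0,  0, -1,  0,  0,  0,  0, -1,  0,  0,  0,  0,  1,  0,  0;
      1,  0,  0,  0,  0,  0,  1,  1,  1,  1,  0,  1,  1,  1,  1,  1,  0,  0,  0,  0,
      0,  0,  0,  1,  0,  0,  0,  0, -1,  0,  0,  0,  0, -1,  0,  0,  0,  0,  1,  0;
      1,  1,  1,  0,  0, -1, -1, -1,  0,  0, -1, -1, -1,  0,  0,  1,  1,  1,  0,  0,
      0,  0,  0,  0,  1,  1,  1,  1,  1,  0,  1,  1,  1,  1,  0,  0,  0,  0,  0,  1]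

def sectionIdx : Fin 8 → Fin 40 := ![18, 19, 34, 35, 36, 37, 38, 39]

def sectionMat : Matrix (Fin 40) (Fin 8) ℤ :=
  Matrix.of fun j i => if j = sectionIdx i then 1 else 0

set_option maxRecDepth 100000 in
theorem quotientProj_mul_sectionMat : quotientProj * sectionMat = 1 := by
  decide

set_option maxRecDepth 100000 in
theorem quotientProj_mulVec_generator : ∀ t α, quotientProj *ᵥ generator t α = 0 := by
  decide

-- Read off from an integer row reduction of the generators, in the order of the coordinates.
def pivotCombination : Fin 40 → List (ℤ × Fin 4 × Fin 10) :=
  ![[(1, 1, 6)], [(1, 1, 5)], [(1, 1, 4)], [(1, 1, 3)], [(1, 1, 2)],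
    [(1, 1, 1)], [(1, 1, 0)], [(1, 1, 9)], [(1, 1, 8)], [(1, 1, 7)],
    [(-1, 1, 1), (1, 2, 2)], [(-1, 1, 0), (1, 2, 1)],
    [(1, 1, 7), (-1, 2, 8)], [(1, 1, 6), (-1, 2, 7)],
    [(1, 1, 5), (-1, 2, 6)], [(1, 1, 4), (-1, 2, 5)],
    [(1, 1, 3), (-1, 2, 4)], [(1, 1, 2), (-1, 2, 3)],
    [], [],
    [(1, 0, 6)], [(1, 0, 5)], [(1, 0, 4)], [(1, 0, 3)], [(1, 0, 2)],
    [(1, 0, 1)], [(1, 0, 0)], [(1, 0, 9)], [(1, 0, 8)], [(1, 0, 7)],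
    [(1, 0, 0), (-1, 0, 1), (-1, 1, 2), (-1, 1, 4), (1, 2, 3), (1, 3, 3)],
    [(-1, 0, 0), (1, 0, 9), (-1, 1, 1), (-1, 1, 3), (1, 2, 2), (1, 3, 2)],
    [(1, 0, 8), (-1, 0, 9), (-1, 1, 0), (-1, 1, 2), (1, 2, 1), (1, 3, 1)],
    [(1, 0, 7), (-1, 0, 8), (-1, 1, 1), (-1, 1, 9), (1, 2, 0), (1, 3, 0)],
    [], [], [], [], [], []]

def pivotVec (j : Fin 40) : Fin 40 → ℤ :=
  ((pivotCombination j).map fun c => c.1 • generator c.2.1 c.2.2).sum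

theorem pivotVec_mem_Gsub (j : Fin 40) : pivotVec j ∈ Gsub := by
  refine list_sum_mem fun _ hx => ?_
  obtain ⟨c, -, rfl⟩ := List.mem_map.1 hx
  exact AddSubgroup.zsmul_mem _ (generator_mem_Gsub _ _) _

set_option maxRecDepth 100000 in
theorem exists_sectionIdx_or_pivotVec_unitriangular (j : Fin 40) :
    (∃ i, sectionIdx i = j) ∨ (pivotVec j j = 1 ∧ ∀ i < j, pivotVec j i = 0) := by
  revert j
  decide

abbrev quotientHom : (Fin 40 → ℤ) →+ (Fin 8 → ℤ) := quotientProj.mulVecLin.toAddMonoidHom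

abbrev sectionHom : (Fin 8 → ℤ) →+ (Fin 40 → ℤ) := sectionMat.mulVecLin.toAddMonoidHom

theorem rightInverse_sectionHom_quotientHom : Function.RightInverse sectionHom quotientHom :=
  fun y => by simp [mulVec_mulVec, quotientProj_mul_sectionMat]

theorem Gsub_le_ker_quotientHom : Gsub ≤ quotientHom.ker := by
  rw [Gsub_eq_closure_generator, AddSubgroup.closure_le]
  rintro _ ⟨⟨t, α⟩, rfl⟩
  exact quotientProj_mulVec_generator t α

theorem Gsub_sup_range_sectionHom_eq_top : Gsub ⊔ sectionHom.range = ⊤ := by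
  have htop := Submodule.eq_top_of_forall_exists_unitriangular
    (Gsub ⊔ sectionHom.range).toIntSubmodule fun j => ?_
  · exact (map_eq_top_iff AddSubgroup.toIntSubmodule).1 htop
  rcases exists_sectionIdx_or_pivotVec_unitriangular j with ⟨i, rfl⟩ | ⟨hj, hlow⟩
  · refine ⟨Pi.single (sectionIdx i) 1, ?_, by simp, fun k hk => by simp [hk.ne]⟩
    exact AddSubgroup.mem_sup_right ⟨Pi.single i 1, by ext; simp [sectionMat, Pi.single_apply]⟩
  · exact ⟨pivotVec j, AddSubgroup.mem_sup_left (pivotVec_mem_Gsub j), hj, hlow⟩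

theorem ker_quotientHom : quotientHom.ker = Gsub :=
  AddMonoidHom.ker_eq_of_sup_range_eq_top rightInverse_sectionHom_quotientHom
    Gsub_le_ker_quotientHom Gsub_sup_range_sectionHom_eq_top

/-- The quotient `ℤ⁴⁰ / G` is a free abelian group of rank 8
(in particular torsion-free); this underlies `K₀(A_T) ≅ ℤ⁸ ⊕ ℤ` for Penrose tilings. -/
theorem quotient_Gsub_free_rank_8 :
    Nonempty (((Fin 40 → ℤ) ⧸ Gsub) ≃+ (Fin 8 → ℤ)) := by
  rw [← ker_quotientHom]
  exact ⟨QuotientAddGroup.quotientKerEquivOfRightInverse _ _ rightInverse_sectionHom_quotientHom⟩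
end

section
/- The kernel of the ℤ-linear map ℤ²⁰ → ℤ²⁰, x ↦ σ̌₀ x, is a free abelian group of rank 2; equivalently, the 20×20 integer matrix σ̌₀ has rank 18 over ℚ. -/
/-- For each row `i` (numbered `1`–`20`), the list of columns (numbered `1`–`20`) where the
Penrose rhombus substitution matrix `σ̌₀` has entry `1`; all other entries are `0`. -/
def sigma0Cols : Fin 20 → List ℕ :=
  ![[6, 7], [6, 7], [8, 12, 14], [8, 9, 13], [1, 9, 10],
    [1, 10, 15, 17], [2, 3, 16, 18], [2, 3, 4], [4, 5, 20], [5, 11, 19],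
    [14], [19], [6], [1, 17], [8, 12, 18],
    [3, 9, 13], [4, 10, 20], [5, 11, 15], [2, 16], [7]]

/-- The substitution matrix `σ̌₀ ∈ M₂₀(ℤ)` of the Penrose rhombus substitution `ρ̌₀`. -/
def sigma0 : Matrix (Fin 20) (Fin 20) ℤ :=
  Matrix.of fun i j => if (j.val + 1) ∈ sigma0Cols i then 1 else 0

/-! Integer row and column operations bring `σ̌₀` to the form `U σ̌₀ V = diag(1, …, 1, 0, 0)`
with `U`, `V` unimodular; the matrices below, together with right inverses certifying that they
are invertible over `ℤ`, were found by computer and are checked by `decide`. Since `V` is a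
`ℤ`-automorphism, it identifies the kernel of the diagonal matrix, `ℤ²` on the last two
coordinates, with `ker σ̌₀`; over `ℚ`, invertible factors do not change the rank, which is
therefore that of the diagonal matrix, `18`. -/

namespace Matrix

variable {n R : Type*} [Fintype n] [DecidableEq n] [CommRing R]

theorem mem_ker_mulVecLin_diagonal [NoZeroDivisors R] {d y : n → R} :
    y ∈ LinearMap.ker (diagonal d).mulVecLin ↔ ∀ i, d i ≠ 0 → y i = 0 := by
  simp only [LinearMap.mem_ker, mulVecLin_apply, funext_iff, mulVec_diagonal, Pi.zero_apply,
    mul_eq_zero]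
  exact forall_congr' fun i => or_iff_not_imp_left

def kerMulVecLinDiagonalEquiv [NoZeroDivisors R] [DecidableEq R] (d : n → R) :
    LinearMap.ker (diagonal d).mulVecLin ≃ₗ[R] ({i // d i = 0} → R) where
  toFun y i := y.1 i
  invFun c := ⟨fun i => if h : d i = 0 then c ⟨i, h⟩ else 0,
    mem_ker_mulVecLin_diagonal.2 fun _ hi => dif_neg hi⟩
  map_add' _ _ := rfl
  map_smul' _ _ := rfl
  left_inv y := by
    ext i
    by_cases h : d i = 0
    · simp [h]
    · simp [h, mem_ker_mulVecLin_diagonal.1 y.2 i h]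
  right_inv c := by
    ext ⟨i, h⟩
    simp [h]

theorem ker_mulVecLin_mul_mul_of_invertible (A U V : Matrix n n R) [Invertible U] :
    LinearMap.ker (U * A * V).mulVecLin = (LinearMap.ker A.mulVecLin).comap V.mulVecLin := by
  ext x
  simp only [LinearMap.mem_ker, Submodule.mem_comap, mulVecLin_apply, ← mulVec_mulVec]
  exact (mulVec_injective_of_isUnit (isUnit_of_invertible U)).eq_iff' (mulVec_zero U)

def kerMulVecLinEquivOfInvertible (A U V : Matrix n n R) [Invertible U] [Invertible V] :
    LinearMap.ker A.mulVecLin ≃ₗ[R] LinearMap.ker (U * A * V).mulVecLin :=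
  (toLinearEquiv' V inferInstance).symm.ofSubmodules _ _ <| by
    rw [Submodule.map_equiv_eq_comap_symm, LinearEquiv.symm_symm,
      ker_mulVecLin_mul_mul_of_invertible]
    rfl

theorem rank_mul_mul_of_invertible (A U V : Matrix n n R) [Invertible U] [Invertible V] :
    (U * A * V).rank = A.rank := by
  rw [rank_mul_eq_left_of_isUnit_det _ _ (isUnit_det_of_invertible V),
    rank_mul_eq_right_of_isUnit_det _ _ (isUnit_det_of_invertible U)]

end Matrix


def sigma0U : Matrix (Fin 20) (Fin 20) ℤ :=
  !![1, 0, 0, 0, 0, 0, 0, 0, 0, 0, 0, 0, 0, 0, 0, 0, 0, 0, 0, 0;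
    0, 0, 1, 0, 0, 0, 0, 0, 0, 0, 0, 0, 0, 0, 0, 0, 0, 0, 0, 0;
    0, 0, -1, 1, 0, 0, 0, 0, 0, 0, 0, 0, 0, 0, 0, 0, 0, 0, 0, 0;
    0, 0, 1, -1, 1, 0, 0, 0, 0, 0, 0, 0, 0, 0, 0, 0, 0, 0, 0, 0;
    0, 0, 1, -1, 1, -1, 0, 0, 0, 0, 0, 0, 0, 0, 0, 0, 0, 0, 0, 0;
    0, 0, 0, 0, 0, 0, 1, 0, 0, 0, 0, 0, 0, 0, 0, 0, 0, 0, 0, 0;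
    0, 0, 0, 0, 0, 0, -1, 1, 0, 0, 0, 0, 0, 0, 0, 0, 0, 0, 0, 0;
    0, 0, 0, 0, 0, 0, 1, -1, 1, 0, 0, 0, 0, 0, 0, 0, 0, 0, 0, 0;
    0, 0, 0, 0, 0, 0, -1, 1, -1, 1, 0, 0, 0, 0, 0, 0, 0, 0, 0, 0;
    0, 0, 0, 0, 0, 0, 0, 0, 0, 0, 1, 0, 0, 0, 0, 0, 0, 0, 0, 0;
    0, 0, 0, 0, 0, 0, 0, 0, 0, 0, 0, 1, 0, 0, 0, 0, 0, 0, 0, 0;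
    1, 0, 0, 0, 0, 0, 0, 0, 0, 0, 0, 0, -1, 0, 0, 0, 0, 0, 0, 0;
    0, 0, 0, 0, 0, 1, 0, 0, 0, 0, 0, 0, 0, -1, 0, 0, 0, 0, 0, 0;
    0, 0, -1, 0, 0, 0, 0, 0, 0, 0, 1, 0, 0, 0, 1, 0, 0, 0, 0, 0;
    0, 0, 0, 0, -1, 1, 0, 0, 0, 0, 0, 0, 0, 0, 0, 1, 0, 0, 0, 0;
    0, 0, 1, 0, -1, 0, 1, -1, 0, 0, -1, 0, 0, 1, -1, 1, 1, 0, 0, 0;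
    0, 0, 0, 0, -1, 1, 0, 0, 0, 1, 0, -1, 0, 0, 0, 1, 0, -1, 0, 0;
    0, 0, 1, 0, 0, 0, 1, 0, 0, 0, -1, 0, 0, 0, -1, 0, 0, 0, -1, 0;
    -1, 1, 0, 0, 0, 0, 0, 0, 0, 0, 0, 0, 0, 0, 0, 0, 0, 0, 0, 0;
    -1, 0, 0, 0, 0, 0, 0, 0, 0, 0, 0, 0, 1, 0, 0, 0, 0, 0, 0, 1]

def sigma0UInv : Matrix (Fin 20) (Fin 20) ℤ :=
  !![1, 0, 0, 0, 0, 0, 0, 0, 0, 0, 0, 0, 0, 0, 0, 0, 0, 0, 0, 0;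
    1, 0, 0, 0, 0, 0, 0, 0, 0, 0, 0, 0, 0, 0, 0, 0, 0, 0, 1, 0;
    0, 1, 0, 0, 0, 0, 0, 0, 0, 0, 0, 0, 0, 0, 0, 0, 0, 0, 0, 0;
    0, 1, 1, 0, 0, 0, 0, 0, 0, 0, 0, 0, 0, 0, 0, 0, 0, 0, 0, 0;
    0, 0, 1, 1, 0, 0, 0, 0, 0, 0, 0, 0, 0, 0, 0, 0, 0, 0, 0, 0;
    0, 0, 0, 1, -1, 0, 0, 0, 0, 0, 0, 0, 0, 0, 0, 0, 0, 0, 0, 0;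
    0, 0, 0, 0, 0, 1, 0, 0, 0, 0, 0, 0, 0, 0, 0, 0, 0, 0, 0, 0;
    0, 0, 0, 0, 0, 1, 1, 0, 0, 0, 0, 0, 0, 0, 0, 0, 0, 0, 0, 0;
    0, 0, 0, 0, 0, 0, 1, 1, 0, 0, 0, 0, 0, 0, 0, 0, 0, 0, 0, 0;
    0, 0, 0, 0, 0, 0, 0, 1, 1, 0, 0, 0, 0, 0, 0, 0, 0, 0, 0, 0;
    0, 0, 0, 0, 0, 0, 0, 0, 0, 1, 0, 0, 0, 0, 0, 0, 0, 0, 0, 0;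
    0, 0, 0, 0, 0, 0, 0, 0, 0, 0, 1, 0, 0, 0, 0, 0, 0, 0, 0, 0;
    1, 0, 0, 0, 0, 0, 0, 0, 0, 0, 0, -1, 0, 0, 0, 0, 0, 0, 0, 0;
    0, 0, 0, 1, -1, 0, 0, 0, 0, 0, 0, 0, -1, 0, 0, 0, 0, 0, 0, 0;
    0, 1, 0, 0, 0, 0, 0, 0, 0, -1, 0, 0, 0, 1, 0, 0, 0, 0, 0, 0;
    0, 0, 1, 0, 1, 0, 0, 0, 0, 0, 0, 0, 0, 0, 1, 0, 0, 0, 0, 0;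
    0, 0, 0, 0, 0, 0, 1, 0, 0, 0, 0, 0, 1, 1, -1, 1, 0, 0, 0, 0;
    0, 0, 0, 0, 0, 0, 0, 1, 1, 0, -1, 0, 0, 0, 1, 0, -1, 0, 0, 0;
    0, 0, 0, 0, 0, 1, 0, 0, 0, 0, 0, 0, 0, -1, 0, 0, 0, -1, 0, 0;
    0, 0, 0, 0, 0, 0, 0, 0, 0, 0, 0, 1, 0, 0, 0, 0, 0, 0, 0, 1]

def sigma0V : Matrix (Fin 20) (Fin 20) ℤ :=
  !![0, 0, 0, 1, -1, 0, 0, 0, 0, 0, 0, 0, -1, 0, 0, 0, -1, 1, 1, 0;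
    0, 0, 0, 0, 0, 1, 0, 0, 0, 0, 0, 0, 0, -1, 0, -1, 1, -1, 0, 1;
    0, 0, 0, 0, 0, 0, 0, 0, 0, 0, 0, 0, 0, 0, 0, 0, 0, 1, 0, 0;
    0, 0, 0, 0, 0, 0, 1, 0, 0, 0, 0, 0, 0, 1, 0, 1, -1, 0, 0, -1;
    0, 0, 0, 0, 0, 0, 0, 1, 0, 0, 0, 0, 0, -1, 0, -1, 1, 0, 0, 0;
    1, 0, 0, 0, 0, 0, 0, 0, 0, 0, 0, -1, 0, 0, 0, 0, 0, 0, 0, 0;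
    0, 0, 0, 0, 0, 0, 0, 0, 0, 0, 0, 1, 0, 0, 0, 0, 0, 0, 0, 0;
    0, 1, 0, 0, -1, 0, 0, 0, 0, 0, 0, 0, 0, 0, -1, 0, 0, 1, 0, 0;
    0, 0, 1, 0, 1, 0, 0, 0, 0, 0, 0, 0, 0, 0, 1, 0, 0, -1, -1, 0;
    0, 0, 0, 0, 0, 0, 0, 0, 0, 0, 0, 0, 1, 0, -1, 0, 1, 0, 0, 0;
    0, 0, 0, 0, 0, 0, 0, 0, 1, 0, -1, 0, 0, 1, 0, 1, -1, 0, 0, 0;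
    0, 0, 0, 0, 1, 0, 0, 0, 0, -1, 0, 0, 0, 0, 1, 0, 0, -1, 0, 0;
    0, 0, 0, 0, 0, 0, 0, 0, 0, 0, 0, 0, 0, 0, 0, 0, 0, 0, 1, 0;
    0, 0, 0, 0, 0, 0, 0, 0, 0, 1, 0, 0, 0, 0, 0, 0, 0, 0, 0, 0;
    0, 0, 0, 0, 0, 0, 0, 0, 0, 0, 0, 0, 0, 0, 1, 0, -1, 0, 0, 0;
    0, 0, 0, 0, 0, 0, 0, 0, 0, 0, 0, 0, 0, 0, 0, 1, -1, 0, 0, -1;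
    0, 0, 0, 0, 0, 0, 0, 0, 0, 0, 0, 0, 0, 0, 0, 0, 1, -1, -1, 0;
    0, 0, 0, 0, 0, 0, 0, 0, 0, 0, 0, 0, 0, 1, 0, 0, 0, 0, 0, 0;
    0, 0, 0, 0, 0, 0, 0, 0, 0, 0, 1, 0, 0, 0, 0, 0, 0, 0, 0, 0;
    0, 0, 0, 0, 0, 0, 0, 0, 0, 0, 0, 0, 0, 0, 0, 0, 0, 0, 0, 1]

def sigma0VInv : Matrix (Fin 20) (Fin 20) ℤ :=
  !![0, 0, 0, 0, 0, 1, 1, 0, 0, 0, 0, 0, 0, 0, 0, 0, 0, 0, 0, 0;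
    0, 0, 0, 0, 0, 0, 0, 1, 0, 0, 0, 1, 0, 1, 0, 0, 0, 0, 0, 0;
    0, 0, 0, 0, 0, 0, 0, 0, 1, 0, 0, -1, 1, -1, 0, 0, 0, 0, 0, 0;
    1, 0, 0, 0, 0, 0, 0, 0, 0, 1, 0, 1, -1, 1, 0, 0, 0, 0, 0, 0;
    0, 0, 0, 0, 0, 0, 0, 0, 0, 0, 0, 1, -1, 1, -1, 0, -1, 0, 0, 0;
    0, 1, 1, 0, 0, 0, 0, 0, 0, 0, 0, 0, 0, 0, 0, 1, 0, 1, 0, 0;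
    0, 0, 0, 1, 0, 0, 0, 0, 0, 0, 0, 0, 0, 0, 0, -1, 0, -1, 0, 0;
    0, 0, 0, 0, 1, 0, 0, 0, 0, 0, 0, 0, 0, 0, 0, 1, 0, 1, 0, 1;
    0, 0, 0, 0, 0, 0, 0, 0, 0, 0, 1, 0, 0, 0, 0, -1, 0, -1, 1, -1;
    0, 0, 0, 0, 0, 0, 0, 0, 0, 0, 0, 0, 0, 1, 0, 0, 0, 0, 0, 0;
    0, 0, 0, 0, 0, 0, 0, 0, 0, 0, 0, 0, 0, 0, 0, 0, 0, 0, 1, 0;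
    0, 0, 0, 0, 0, 0, 1, 0, 0, 0, 0, 0, 0, 0, 0, 0, 0, 0, 0, 0;
    0, 0, 0, 0, 0, 0, 0, 0, 0, 1, 0, 0, 0, 0, 1, 0, 0, 0, 0, 0;
    0, 0, 0, 0, 0, 0, 0, 0, 0, 0, 0, 0, 0, 0, 0, 0, 0, 1, 0, 0;
    0, 0, 1, 0, 0, 0, 0, 0, 0, 0, 0, 0, 1, 0, 1, 0, 1, 0, 0, 0;
    0, 0, 1, 0, 0, 0, 0, 0, 0, 0, 0, 0, 1, 0, 0, 1, 1, 0, 0, 1;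
    0, 0, 1, 0, 0, 0, 0, 0, 0, 0, 0, 0, 1, 0, 0, 0, 1, 0, 0, 0;
    0, 0, 1, 0, 0, 0, 0, 0, 0, 0, 0, 0, 0, 0, 0, 0, 0, 0, 0, 0;
    0, 0, 0, 0, 0, 0, 0, 0, 0, 0, 0, 0, 1, 0, 0, 0, 0, 0, 0, 0;
    0, 0, 0, 0, 0, 0, 0, 0, 0, 0, 0, 0, 0, 0, 0, 0, 0, 0, 0, 1]

def sigma0Diag : Fin 20 → ℤ := fun i => if (i : ℕ) < 18 then 1 else 0

set_option maxHeartbeats 4000000 in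
theorem sigma0U_mul_sigma0UInv : sigma0U * sigma0UInv = 1 := by decide

set_option maxHeartbeats 4000000 in
theorem sigma0V_mul_sigma0VInv : sigma0V * sigma0VInv = 1 := by decide

set_option maxHeartbeats 4000000 in
theorem sigma0U_mul_sigma0_mul_sigma0V :
    sigma0U * sigma0 * sigma0V = Matrix.diagonal sigma0Diag := by decide

instance : Invertible sigma0U := invertibleOfRightInverse _ _ sigma0U_mul_sigma0UInv

instance : Invertible sigma0V := invertibleOfRightInverse _ _ sigma0V_mul_sigma0VInv

theorem card_sigma0Diag_eq_zero : Fintype.card {i // sigma0Diag i = 0} = 2 := by decide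

theorem sigma0_map_intCast_rank : (sigma0.map fun x : ℤ => (x : ℚ)).rank = 18 := by
  let f := (Int.castRingHom ℚ).mapMatrix (m := Fin 20)
  let := Invertible.map f sigma0U
  let := Invertible.map f sigma0V
  have hD : f sigma0U * f sigma0 * f sigma0V = Matrix.diagonal fun i => (sigma0Diag i : ℚ) := by
    rw [← map_mul, ← map_mul, sigma0U_mul_sigma0_mul_sigma0V]
    simp [f, Matrix.diagonal_map]
  calc (sigma0.map fun x : ℤ => (x : ℚ)).rank = (f sigma0).rank := rfl
    _ = (f sigma0U * f sigma0 * f sigma0V).rank := (Matrix.rank_mul_mul_of_invertible ..).symm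
    _ = 18 := by
      rw [hD, Matrix.rank_diagonal]
      simp only [sigma0Diag, Int.cast_ite, Int.cast_one, Int.cast_zero, ne_eq, ite_eq_right_iff,
        one_ne_zero, imp_false, not_not]
      decide

/-- The kernel of the `ℤ`-linear map `x ↦ σ̌₀ x` on `ℤ²⁰` is a free
abelian group of rank 2; equivalently, `σ̌₀` has rank 18 over `ℚ`. -/
theorem ker_sigma0_free_rank_two :
    Nonempty (↥(LinearMap.ker sigma0.mulVecLin) ≃+ (Fin 2 → ℤ)) ∧
      (sigma0.map fun x : ℤ => (x : ℚ)).rank = 18 := by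
  let e : LinearMap.ker sigma0.mulVecLin ≃ₗ[ℤ] (Fin 2 → ℤ) :=
    (Matrix.kerMulVecLinEquivOfInvertible sigma0 sigma0U sigma0V).trans <|
      (LinearEquiv.ofEq _ _ (by rw [sigma0U_mul_sigma0_mul_sigma0V])).trans <|
        (Matrix.kerMulVecLinDiagonalEquiv sigma0Diag).trans <|
          LinearEquiv.funCongrLeft ℤ ℤ (Fintype.equivFinOfCardEq card_sigma0Diag_eq_zero).symm
  exact ⟨⟨e.toAddEquiv⟩, sigma0_map_intCast_rank⟩
end

section
/- The kernel of σ̌₀ equals the kernel of its square: for the ℤ-linear maps ℤ²⁰ → ℤ²⁰ given by x ↦ σ̌₀ x and x ↦ σ̌₀² x, one has ker σ̌₀ = ker σ̌₀². -/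
namespace Matrix

variable {R n : Type*} [CommRing R] [Fintype n] [DecidableEq n]

theorem ker_mulVecLin_eq_ker_sq_of_mul_sq_eq {A B : Matrix n n R} (h : B * A ^ 2 = A) :
    LinearMap.ker A.mulVecLin = LinearMap.ker (A ^ 2).mulVecLin := by
  refine le_antisymm ?_ ?_
  · rw [sq, mulVecLin_mul]
    exact LinearMap.ker_le_ker_comp _ _
  · calc LinearMap.ker (A ^ 2).mulVecLin
        ≤ LinearMap.ker (B.mulVecLin ∘ₗ (A ^ 2).mulVecLin) := LinearMap.ker_le_ker_comp _ _
      _ = LinearMap.ker A.mulVecLin := by rw [← mulVecLin_mul, h]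

end Matrix

-- A solution of `X * σ̌₀ ^ 2 = σ̌₀` over `ℤ`, found by computer.
def sigma0LeftQuotSq : Matrix (Fin 20) (Fin 20) ℤ :=
  Matrix.of ![![0, 0, 0, 0, 1, 0, 0, 1, 0, 0, 0, 0, 0, 0, 0, -1, -1, 0, 0, 0],
    ![0, 0, 0, 0, 1, 0, 0, 1, 0, 0, 0, 0, 0, 0, 0, -1, -1, 0, 0, 0],
    ![0, 0, 1, 0, 0, 0, 1, 0, 0, 0, -1, 0, 0, 0, -1, 0, 0, 0, -1, 0],
    ![0, 0, -1, 0, -1, 0, -1, 0, 0, 0, 1, 0, 0, 0, 1, 1, 1, 0, 1, 0],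
    ![0, 0, 0, 0, 0, 1, 0, 0, 1, 1, 0, -1, 0, -1, 0, 0, -1, -1, 0, 0],
    ![0, 0, 0, 0, 0, 0, 0, 0, 0, 0, 0, 0, 1, 0, 0, 0, 0, 0, 0, 0],
    ![1, 0, 0, 0, 0, 0, 0, 0, 0, 0, 0, 0, -1, 0, 0, 0, 0, 0, 0, 0],
    ![0, 0, 1, 1, 0, 0, 1, 0, 0, 0, -1, 0, 0, 0, -1, -1, 0, 0, -1, 0],
    ![0, 0, 0, 0, 0, -1, 0, -1, 0, -1, 0, 1, 0, 1, 0, 1, 1, 1, 0, 0],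
    ![0, 0, 0, 0, 0, 1, 0, 0, 0, 1, 0, -1, 0, -1, 0, 0, 0, -1, 0, 0],
    ![0, 0, 0, 0, 0, -1, 0, 0, -1, 0, 0, 0, 0, 1, 0, 0, 1, 1, 0, 0],
    ![0, 0, 0, -1, 0, 0, -1, 0, 0, 0, 0, 0, 0, 0, 1, 1, 0, 0, 1, 0],
    ![0, 0, -1, 0, 0, 1, -1, 1, 0, 1, 1, -1, 0, -1, 1, 0, -1, -1, 1, 0],
    ![0, 0, 0, 0, 0, 0, 0, 0, 0, 0, 1, 0, 0, 0, 0, 0, 0, 0, 0, 0],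
    ![0, 0, 0, 0, 0, 0, 0, 0, 0, -1, 0, 1, 0, 0, 0, 0, 0, 1, 0, 0],
    ![0, 0, 0, 0, -1, 0, 0, -1, 0, 0, 0, 0, 0, 0, 0, 1, 1, 0, 1, 0],
    ![0, 0, 0, 0, -1, 0, 0, -1, 0, 0, 0, 0, 0, 1, 0, 1, 1, 0, 0, 0],
    ![0, 0, -1, 0, 0, 0, 0, 0, 0, 0, 1, 0, 0, 0, 1, 0, 0, 0, 0, 0],
    ![0, 0, 0, 0, 0, 0, 0, 0, 0, 0, 0, 1, 0, 0, 0, 0, 0, 0, 0, 0],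
    ![0, 0, 1, 0, 1, -1, 1, 0, 0, -1, -1, 1, 0, 1, -1, -1, 0, 1, -1, 0]]

theorem sigma0LeftQuotSq_mul_sq : sigma0LeftQuotSq * sigma0 ^ 2 = sigma0 := by
  rw [sq]
  decide

/-- The kernel of `σ̌₀` equals the kernel of its square:
`ker σ̌₀ = ker σ̌₀²` for the `ℤ`-linear maps `x ↦ σ̌₀ x` and `x ↦ σ̌₀² x` on `ℤ²⁰`. -/
theorem ker_sigma0_eq_ker_sq :
    LinearMap.ker sigma0.mulVecLin = LinearMap.ker (sigma0 ^ 2).mulVecLin :=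
  Matrix.ker_mulVecLin_eq_ker_sq_of_mul_sq_eq sigma0LeftQuotSq_mul_sq
end
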